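/- arXiv:2402.07797 — 2 statements merged into one kernel-verified Lean document; each statement's English description precedes it below -/
import Mathlib

section
/- Fix λ ∈ ℝ^d with λ ⪰ 0. The function x ↦ L(x,λ) = Φ(x) + Σ_{i=1}^n λ_iᵀ g_i(x_i) is β-smooth on Δ^n with β = n·A_max·Φ_max + γ·Σ_{i=1}^n Σ_{m=1}^{d_i} λ_{i,m}; in particular, if ‖λ‖₂ ≤ Λ then one may take β = n·A_max·Φ_max + √d·Λ·γ. -/
open scoped BigOperators

noncomputable section

/-- The probability simplex `Δ(A_i) ⊆ ℝ^{|A_i|}` with the Euclidean norm. -/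
def simplex (k : ℕ) : Set (EuclideanSpace ℝ (Fin k)) :=
  {x | (∀ j, 0 ≤ x j) ∧ ∑ j, x j = 1}

/-- The joint strategy space with the Euclidean (ℓ²) norm. -/
abbrev Strat (n : ℕ) (A : Fin n → ℕ) := PiLp 2 fun i => EuclideanSpace ℝ (Fin (A i))

/-- The product of simplices `Δ^n = Δ(A_1) × ⋯ × Δ(A_n)`. -/
def prodSimplex (n : ℕ) (A : Fin n → ℕ) : Set (Strat n A) :=
  {x | ∀ i, x i ∈ simplex (A i)}

/-- The multilinear extension `Φ(x) = ∑_a φ(a) ∏_i x_i(a_i)` of `φ`. -/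
def pot (n : ℕ) (A : Fin n → ℕ) (φ : (∀ i, Fin (A i)) → ℝ) (x : Strat n A) : ℝ :=
  ∑ a : ∀ i, Fin (A i), φ a * ∏ i, x i (a i)

/-!
Measure each block `xᵢ` in the ℓ¹ norm. Then `Φ` is a multilinear form of norm at most `Φmax`,
and its derivative is `DΦ(x) v = ∑ᵢ Φ(x with xᵢ replaced by vᵢ)`. On `Δⁿ` every block has
ℓ¹ norm `1`, so the standard difference estimate for multilinear maps gives
`|DΦ(x) v - DΦ(y) v| ≤ Φmax · (∑ₖ ‖xₖ - yₖ‖₁) · (∑ᵢ ‖vᵢ‖₁)`, and Cauchy–Schwarz bounds each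
factor by `√(n·Amax)` times a Euclidean norm. The constraint term is a nonnegative combination
of `γ`-smooth functions of single blocks, and `∑ λ ≤ √d ‖λ‖₂` is Cauchy–Schwarz again.
-/

open Finset Function

lemma sum_le_sqrt_card_mul_sqrt_sum_sq {ι : Type*} (s : Finset ι) (f : ι → ℝ) :
    ∑ i ∈ s, f i ≤ √(#s) * √(∑ i ∈ s, f i ^ 2) := by
  rw [← Real.sqrt_mul (Nat.cast_nonneg _)]
  exact (le_abs_self _).trans (Real.abs_le_sqrt (sq_sum_le_card_mul_sum_sq ..))

lemma sum_sum_le_sqrt_mul_sqrt {ι : Type*} [Fintype ι] {μ : ι → Type*} [∀ i, Fintype (μ i)]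
    (f : ∀ i, μ i → ℝ) :
    ∑ i, ∑ m, f i m ≤ √(∑ i, (Fintype.card (μ i) : ℝ)) * √(∑ i, ∑ m, f i m ^ 2) := by
  simpa [sum_sigma', card_sigma] using
    sum_le_sqrt_card_mul_sqrt_sum_sq (univ.sigma fun _ => univ) fun p => f p.1 p.2

lemma EuclideanSpace.sum_abs_le_sqrt_card_mul_norm {ι : Type*} [Fintype ι]
    (z : EuclideanSpace ℝ ι) : ∑ j, |z j| ≤ √(Fintype.card ι) * ‖z‖ := by
  simpa [EuclideanSpace.norm_eq, sq_abs] using sum_le_sqrt_card_mul_sqrt_sum_sq univ (|z ·|)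

lemma PiLp.sum_norm_le_sqrt_card_mul_norm {ι : Type*} [Fintype ι] {β : ι → Type*}
    [∀ i, SeminormedAddCommGroup (β i)] (z : PiLp 2 β) :
    ∑ i, ‖z i‖ ≤ √(Fintype.card ι) * ‖z‖ := by
  simpa [PiLp.norm_eq_of_L2] using sum_le_sqrt_card_mul_sqrt_sum_sq univ (‖z ·‖)

lemma MultilinearMap.norm_image_update_sub_update_le {𝕜 ι G : Type*} {E : ι → Type*}
    [NontriviallyNormedField 𝕜] [Fintype ι] [DecidableEq ι]
    [∀ i, SeminormedAddCommGroup (E i)] [∀ i, NormedSpace 𝕜 (E i)]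
    [SeminormedAddCommGroup G] [NormedSpace 𝕜 G]
    (f : MultilinearMap 𝕜 E G) {C : ℝ} (hC : 0 ≤ C) (H : ∀ m, ‖f m‖ ≤ C * ∏ i, ‖m i‖)
    {m₁ m₂ : ∀ i, E i} (h₁ : ∀ j, ‖m₁ j‖ ≤ 1) (h₂ : ∀ j, ‖m₂ j‖ ≤ 1) (i : ι) (w : E i) :
    ‖f (update m₁ i w) - f (update m₂ i w)‖ ≤ C * ‖w‖ * ∑ k, ‖m₁ k - m₂ k‖ := by
  refine (f.norm_image_sub_le_of_bound' hC H _ _).trans ?_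
  rw [mul_assoc, mul_sum univ _ ‖w‖]
  gcongr C * ∑ k, ?_ with k
  calc _ ≤ ∏ j, (if j = k then ‖m₁ k - m₂ k‖ else 1) * (if j = i then ‖w‖ else 1) := by
        gcongr with j
        by_cases hjk : j = k <;> by_cases hji : j = i <;> subst_vars <;>
          simp_all [mul_nonneg]
    _ = ‖w‖ * ‖m₁ k - m₂ k‖ := by
        rw [prod_mul_distrib, prod_ite_eq', prod_ite_eq']
        simp [mul_comm]

section MultilinearExtension

variable {ι : Type*} [Fintype ι] [DecidableEq ι] {κ : ι → Type*} [∀ i, Fintype (κ i)]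

def multilinearExtension (φ : (∀ i, κ i) → ℝ) :
    MultilinearMap ℝ (fun i => WithLp 1 (κ i → ℝ)) ℝ :=
  ∑ a, φ a • (MultilinearMap.mkPiAlgebra ℝ ι ℝ).compLinearMap
    fun i => (LinearMap.proj (a i)).comp (WithLp.linearEquiv 1 ℝ (κ i → ℝ)).toLinearMap

lemma multilinearExtension_apply (φ : (∀ i, κ i) → ℝ) (m : ∀ i, WithLp 1 (κ i → ℝ)) :
    multilinearExtension φ m = ∑ a, φ a * ∏ i, m i (a i) := by
  simp [multilinearExtension]

lemma norm_multilinearExtension_le {φ : (∀ i, κ i) → ℝ} {C : ℝ}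
    (hφ : ∀ a, |φ a| ≤ C) (m : ∀ i, WithLp 1 (κ i → ℝ)) :
    ‖multilinearExtension φ m‖ ≤ C * ∏ i, ‖m i‖ :=
  calc ‖multilinearExtension φ m‖ ≤ ∑ a, |φ a| * ∏ i, |m i (a i)| := by
        rw [multilinearExtension_apply, Real.norm_eq_abs]
        exact (abs_sum_le_sum_abs _ _).trans_eq (by simp only [abs_mul, abs_prod])
    _ ≤ ∑ a, C * ∏ i, |m i (a i)| :=
        sum_le_sum fun a _ => mul_le_mul_of_nonneg_right (hφ a) (by positivity)
    _ = C * ∏ i, ‖m i‖ := by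
        simp [PiLp.norm_eq_of_L1, Fintype.prod_sum, mul_sum]

def multilinearExtensionL (φ : (∀ i, κ i) → ℝ) :
    ContinuousMultilinearMap ℝ (fun i => WithLp 1 (κ i → ℝ)) ℝ :=
  (multilinearExtension φ).mkContinuous (∑ a, |φ a|)
    (norm_multilinearExtension_le fun a => single_le_sum (fun b _ => abs_nonneg (φ b)) (mem_univ a))

end MultilinearExtension

section L1

variable {ι : Type*}

def EuclideanSpace.toL1 : EuclideanSpace ℝ ι →L[ℝ] WithLp 1 (ι → ℝ) :=
  (PiLp.continuousLinearEquiv 1 ℝ fun _ : ι => ℝ).symm.toContinuousLinearMap ∘L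
    (PiLp.continuousLinearEquiv 2 ℝ fun _ : ι => ℝ).toContinuousLinearMap

@[simp] lemma EuclideanSpace.toL1_apply (z : EuclideanSpace ℝ ι) (j : ι) : toL1 z j = z j := rfl

lemma EuclideanSpace.norm_toL1 [Fintype ι] (z : EuclideanSpace ℝ ι) : ‖toL1 z‖ = ∑ j, |z j| := by
  simp [PiLp.norm_eq_of_L1]

lemma EuclideanSpace.norm_toL1_le [Fintype ι] (z : EuclideanSpace ℝ ι) :
    ‖toL1 z‖ ≤ √(Fintype.card ι) * ‖z‖ :=
  (norm_toL1 z).trans_le (sum_abs_le_sqrt_card_mul_norm z)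

end L1

open EuclideanSpace

section Potential

variable {n : ℕ} {A : Fin n → ℕ}

def stratToL1 : Strat n A →L[ℝ] ∀ i, WithLp 1 (Fin (A i) → ℝ) :=
  ContinuousLinearMap.pi fun i => toL1 ∘L PiLp.proj 2 _ i

@[simp] lemma stratToL1_apply (x : Strat n A) (i : Fin n) : stratToL1 x i = toL1 (x i) := rfl

lemma pot_eq_comp (φ : (∀ i, Fin (A i)) → ℝ) :
    pot n A φ = multilinearExtensionL φ ∘ stratToL1 := by
  ext x
  simp [pot, multilinearExtensionL, multilinearExtension_apply]

lemma hasFDerivAt_pot (φ : (∀ i, Fin (A i)) → ℝ) (x : Strat n A) :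
    HasFDerivAt (pot n A φ)
      ((multilinearExtensionL φ).linearDeriv (stratToL1 x) ∘L stratToL1) x := by
  rw [pot_eq_comp]
  exact ((multilinearExtensionL φ).hasFDerivAt _).comp x stratToL1.hasFDerivAt

lemma fderiv_pot_apply (φ : (∀ i, Fin (A i)) → ℝ) (x v : Strat n A) :
    fderiv ℝ (pot n A φ) x v =
      ∑ i, multilinearExtension φ (update (stratToL1 x) i (toL1 (v i))) := by
  simp [(hasFDerivAt_pot φ x).fderiv, multilinearExtensionL]

lemma nonempty_of_mem_simplex {k : ℕ} {z : EuclideanSpace ℝ (Fin k)} (hz : z ∈ simplex k) :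
    Nonempty (Fin k) := by
  by_contra h
  rw [not_nonempty_iff] at h
  simpa using hz.2

lemma norm_toL1_of_mem_simplex {k : ℕ} {z : EuclideanSpace ℝ (Fin k)} (hz : z ∈ simplex k) :
    ‖toL1 z‖ = 1 := by
  rw [norm_toL1, ← hz.2]
  exact sum_congr rfl fun j _ => abs_of_nonneg (hz.1 j)

lemma sum_norm_toL1_le {Amax : ℕ} (hA : ∀ i, A i ≤ Amax) (z : Strat n A) :
    ∑ i, ‖toL1 (z i)‖ ≤ √(n * Amax) * ‖z‖ :=
  calc ∑ i, ‖toL1 (z i)‖ ≤ ∑ i, √Amax * ‖z i‖ := by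
        gcongr with i
        refine (norm_toL1_le _).trans ?_
        gcongr
        simpa using hA i
    _ ≤ √Amax * (√n * ‖z‖) := by
        rw [← mul_sum]
        gcongr
        simpa using PiLp.sum_norm_le_sqrt_card_mul_norm z
    _ = √(n * Amax) * ‖z‖ := by
        rw [Real.sqrt_mul (Nat.cast_nonneg _)]
        ring

theorem norm_fderiv_pot_sub_le {φ : (∀ i, Fin (A i)) → ℝ} {Φmax : ℝ} (hφ : ∀ a, |φ a| ≤ Φmax)
    {Amax : ℕ} (hA : ∀ i, A i ≤ Amax) {x y : Strat n A}
    (hx : x ∈ prodSimplex n A) (hy : y ∈ prodSimplex n A) :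
    ‖fderiv ℝ (pot n A φ) x - fderiv ℝ (pot n A φ) y‖ ≤ n * Amax * Φmax * ‖x - y‖ := by
  have hnonempty : ∀ i, Nonempty (Fin (A i)) := fun i => nonempty_of_mem_simplex (hx i)
  obtain ⟨a⟩ : Nonempty (∀ i, Fin (A i)) := inferInstance
  have hΦ : 0 ≤ Φmax := (abs_nonneg _).trans (hφ a)
  have hunit : ∀ {z : Strat n A}, z ∈ prodSimplex n A → ∀ i, ‖stratToL1 z i‖ ≤ 1 :=
    fun hz i => (norm_toL1_of_mem_simplex (hz i)).le
  refine ContinuousLinearMap.opNorm_le_bound _ (by positivity) fun v => ?_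
  calc ‖(fderiv ℝ (pot n A φ) x - fderiv ℝ (pot n A φ) y) v‖
      = ‖∑ i, (multilinearExtension φ (update (stratToL1 x) i (toL1 (v i))) -
          multilinearExtension φ (update (stratToL1 y) i (toL1 (v i))))‖ := by
        rw [sub_apply, fderiv_pot_apply, fderiv_pot_apply, sum_sub_distrib]
    _ ≤ ∑ i, Φmax * ‖toL1 (v i)‖ * ∑ k, ‖stratToL1 x k - stratToL1 y k‖ :=
        norm_sum_le_of_le _ fun i _ =>
          (multilinearExtension φ).norm_image_update_sub_update_le hΦ
            (norm_multilinearExtension_le hφ) (hunit hx) (hunit hy) i _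
    _ = Φmax * (∑ i, ‖toL1 (v i)‖) * ∑ k, ‖toL1 ((x - y) k)‖ := by
        simp [← sum_mul, ← mul_sum]
    _ ≤ Φmax * (√(n * Amax) * ‖v‖) * (√(n * Amax) * ‖x - y‖) := by
        gcongr <;> exact sum_norm_toL1_le hA _
    _ = n * Amax * Φmax * ‖x - y‖ * ‖v‖ := by
        linear_combination Φmax * ‖v‖ * ‖x - y‖ *
          Real.mul_self_sqrt (show (0 : ℝ) ≤ n * Amax by positivity)

end Potential

section Constraints

variable {F : Type*} [NormedAddCommGroup F] [InnerProductSpace ℝ F] [CompleteSpace F]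

lemma norm_gradient_sub_eq (f : F → ℝ) (z w : F) :
    ‖gradient f z - gradient f w‖ = ‖fderiv ℝ f z - fderiv ℝ f w‖ := by
  rw [gradient, gradient, ← LinearIsometryEquiv.map_sub, LinearIsometryEquiv.norm_map]

lemma norm_fderiv_sub_le_of_lipschitzWith_gradient {f : F → ℝ} {K : NNReal}
    (hf : LipschitzWith K (gradient f)) (z w : F) :
    ‖fderiv ℝ f z - fderiv ℝ f w‖ ≤ K * ‖z - w‖ := by
  simpa only [← norm_gradient_sub_eq, dist_eq_norm] using hf.dist_le_mul z w

variable {ι : Type*} [Fintype ι] {E : ι → Type*} [∀ i, NormedAddCommGroup (E i)]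
  [∀ i, InnerProductSpace ℝ (E i)] {μ : ι → Type*} [∀ i, Fintype (μ i)]

lemma hasFDerivAt_sum_sum_comp_apply {g : ∀ i, μ i → E i → ℝ} (hg : ∀ i m, Differentiable ℝ (g i m))
    (lam : ∀ i, μ i → ℝ) (x : PiLp 2 E) :
    HasFDerivAt (fun x : PiLp 2 E => ∑ i, ∑ m, lam i m * g i m (x i))
      (∑ i, ∑ m, lam i m • (fderiv ℝ (g i m) (x i)).comp (PiLp.proj 2 E i)) x :=
  HasFDerivAt.fun_sum fun i _ => HasFDerivAt.fun_sum fun m _ =>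
    (((hg i m _).hasFDerivAt).comp x (PiLp.proj 2 E i).hasFDerivAt).const_mul _

lemma norm_fderiv_sum_sum_comp_apply_sub_le [∀ i, CompleteSpace (E i)] {g : ∀ i, μ i → E i → ℝ}
    (hg : ∀ i m, Differentiable ℝ (g i m)) {γ : ℝ} (hγ : 0 ≤ γ)
    (hgsmooth : ∀ i m, LipschitzWith γ.toNNReal (gradient (g i m)))
    {lam : ∀ i, μ i → ℝ} (hlam : ∀ i m, 0 ≤ lam i m) (x y : PiLp 2 E) :
    ‖fderiv ℝ (fun x : PiLp 2 E => ∑ i, ∑ m, lam i m * g i m (x i)) x -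
        fderiv ℝ (fun x : PiLp 2 E => ∑ i, ∑ m, lam i m * g i m (x i)) y‖ ≤
      γ * (∑ i, ∑ m, lam i m) * ‖x - y‖ := by
  rw [(hasFDerivAt_sum_sum_comp_apply hg lam x).fderiv,
    (hasFDerivAt_sum_sum_comp_apply hg lam y).fderiv]
  have hlam_sum : 0 ≤ ∑ i, ∑ m, lam i m := sum_nonneg fun i _ => sum_nonneg fun m _ => hlam i m
  refine ContinuousLinearMap.opNorm_le_bound _ (by positivity) fun v => ?_
  calc _ = ‖∑ i, ∑ m, lam i m * (fderiv ℝ (g i m) (x i) - fderiv ℝ (g i m) (y i)) (v i)‖ := by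
        simp [sum_sub_distrib, mul_sub]
    _ ≤ ∑ i, ∑ m, lam i m * (γ * ‖x - y‖ * ‖v‖) :=
        norm_sum_le_of_le _ fun i _ => norm_sum_le_of_le _ fun m _ => by
          rw [norm_mul, Real.norm_of_nonneg (hlam i m)]
          refine mul_le_mul_of_nonneg_left ?_ (hlam i m)
          calc _ ≤ ‖fderiv ℝ (g i m) (x i) - fderiv ℝ (g i m) (y i)‖ * ‖v i‖ :=
                ContinuousLinearMap.le_opNorm _ _
            _ ≤ γ * ‖x i - y i‖ * ‖v i‖ := by
                gcongr
                simpa [Real.coe_toNNReal γ hγ] using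
                  norm_fderiv_sub_le_of_lipschitzWith_gradient (hgsmooth i m) (x i) (y i)
            _ ≤ γ * ‖x - y‖ * ‖v‖ := by
                gcongr
                · exact PiLp.norm_apply_le (x - y) i
                · exact PiLp.norm_apply_le v i
    _ = γ * (∑ i, ∑ m, lam i m) * ‖x - y‖ * ‖v‖ := by
        simp only [← sum_mul]
        ring

end Constraints

theorem lagrangian_smooth_in_x_general (n : ℕ) (A : Fin n → ℕ) (φ : (∀ i, Fin (A i)) → ℝ)
    (Φmax : ℝ) (hφ : ∀ a, |φ a| ≤ Φmax)
    (Amax : ℕ) (hA : ∀ i, A i ≤ Amax)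
    (d : Fin n → ℕ) (g : ∀ i, Fin (d i) → EuclideanSpace ℝ (Fin (A i)) → ℝ)
    (γ : ℝ) (hγ : 0 ≤ γ)
    (hgdiff : ∀ i m, Differentiable ℝ (g i m))
    (hgsmooth : ∀ i m, LipschitzWith γ.toNNReal (gradient (g i m)))
    (lam : ∀ i, Fin (d i) → ℝ) (hlam : ∀ i m, 0 ≤ lam i m) (Λ : ℝ) :
    LipschitzOnWith ((n : ℝ) * Amax * Φmax + γ * ∑ i, ∑ m, lam i m).toNNReal
      (gradient fun x : Strat n A => pot n A φ x + ∑ i, ∑ m, lam i m * g i m (x i))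
      (prodSimplex n A) ∧
    (Real.sqrt (∑ i, ∑ m, (lam i m) ^ 2) ≤ Λ →
      LipschitzOnWith
        ((n : ℝ) * Amax * Φmax + Real.sqrt (∑ i, (d i : ℝ)) * Λ * γ).toNNReal
        (gradient fun x : Strat n A => pot n A φ x + ∑ i, ∑ m, lam i m * g i m (x i))
        (prodSimplex n A)) := by
  have hsmooth : ∀ x ∈ prodSimplex n A, ∀ y ∈ prodSimplex n A,
      dist (gradient (fun x : Strat n A => pot n A φ x + ∑ i, ∑ m, lam i m * g i m (x i)) x)
        (gradient (fun x : Strat n A => pot n A φ x + ∑ i, ∑ m, lam i m * g i m (x i)) y) ≤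
      (n * Amax * Φmax + γ * ∑ i, ∑ m, lam i m) * dist x y := by
    intro x hx y hy
    have hG := hasFDerivAt_sum_sum_comp_apply hgdiff lam
    rw [dist_eq_norm, dist_eq_norm, norm_gradient_sub_eq,
      fderiv_fun_add (hasFDerivAt_pot φ x).differentiableAt (hG x).differentiableAt,
      fderiv_fun_add (hasFDerivAt_pot φ y).differentiableAt (hG y).differentiableAt,
      add_sub_add_comm, add_mul]
    exact (norm_add_le _ _).trans (add_le_add (norm_fderiv_pot_sub_le hφ hA hx hy)
      (norm_fderiv_sum_sum_comp_apply_sub_le hgdiff hγ hgsmooth hlam x y))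
  refine ⟨LipschitzOnWith.of_dist_le' hsmooth, fun hΛ => LipschitzOnWith.of_dist_le'
    fun x hx y hy => (hsmooth x hx y hy).trans ?_⟩
  have hlam_sum : ∑ i, ∑ m, lam i m ≤ √(∑ i, (d i : ℝ)) * Λ := by
    simpa using (sum_sum_le_sqrt_mul_sqrt lam).trans
      (mul_le_mul_of_nonneg_left hΛ (Real.sqrt_nonneg _))
  gcongr (_ + ?_) * _
  linarith [mul_le_mul_of_nonneg_left hlam_sum hγ]

/-- **Smoothness of the Lagrangian in `x` for a fixed multiplier `λ ⪰ 0`.**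
With `Φ` the multilinear extension of `φ` (`|φ(a)| ≤ Φmax`, `|A_i| ≤ Amax`) and each
constraint `g i m` convex, differentiable and `γ`-smooth, the function
`x ↦ L(x,λ) = Φ(x) + ∑_i ∑_m λ_{i,m} g_{i,m}(x_i)` is `β`-smooth on `Δ^n` with
`β = n·Amax·Φmax + γ·∑_{i,m} λ_{i,m}`; and if moreover `‖λ‖₂ ≤ Λ` one may take
`β = n·Amax·Φmax + √d·Λ·γ` where `d = ∑_i d_i`. -/
theorem lagrangian_smooth_in_x (n : ℕ) (A : Fin n → ℕ) (φ : (∀ i, Fin (A i)) → ℝ)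
    (Φmax : ℝ) (hφ : ∀ a, |φ a| ≤ Φmax)
    (Amax : ℕ) (hA : ∀ i, A i ≤ Amax)
    (d : Fin n → ℕ) (g : ∀ i, Fin (d i) → EuclideanSpace ℝ (Fin (A i)) → ℝ)
    (γ : ℝ) (hγ : 0 ≤ γ)
    (hgconv : ∀ i m, ConvexOn ℝ Set.univ (g i m))
    (hgdiff : ∀ i m, Differentiable ℝ (g i m))
    (hgsmooth : ∀ i m, LipschitzWith γ.toNNReal (gradient (g i m)))
    (lam : ∀ i, Fin (d i) → ℝ) (hlam : ∀ i m, 0 ≤ lam i m) (Λ : ℝ) :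
    LipschitzOnWith ((n : ℝ) * Amax * Φmax + γ * ∑ i, ∑ m, lam i m).toNNReal
      (gradient fun x : Strat n A => pot n A φ x + ∑ i, ∑ m, lam i m * g i m (x i))
      (prodSimplex n A) ∧
    (Real.sqrt (∑ i, ∑ m, (lam i m) ^ 2) ≤ Λ →
      LipschitzOnWith
        ((n : ℝ) * Amax * Φmax + Real.sqrt (∑ i, (d i : ℝ)) * Λ * γ).toNNReal
        (gradient fun x : Strat n A => pot n A φ x + ∑ i, ∑ m, lam i m * g i m (x i))
        (prodSimplex n A)) :=
  lagrangian_smooth_in_x_general n A φ Φmax hφ Amax hA d g γ hγ hgdiff hgsmooth lam hlam Λ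

end
end

section
/- Assume the constrained potential game setup and Slater's condition with constants ξ_{i,m} > 0. There exists a constant c > 0, depending only on n, A_max, Φ_max, Φ_min, γ, d, G_max, and ξ_min := min_{i,m} ξ_{i,m}, with the following property. Let ε ∈ (0,1], let 0 < μ ≤ ε, let x̂ ∈ Δ^n, let λ̂ := argmax_{λ⪰0} L̃(x̂,λ), and suppose −min{ δᵀ∇_x L̃(x̂,λ̂) : x̂ + δ ∈ Δ^n, ‖δ‖₂ ≤ 1 } ≤ ε. Then x̂ is a (cε)-approximately feasible (cε)-approximate Nash equilibrium: (a) g_{i,m}(x̂_i) ≤ cε for every player i and every m ∈ {1,…,d_i}, and (b) for every player i and every x_i' ∈ Δ(A_i) satisfying g_{i,m}(x_i') ≤ ε for all m, one has Φ(x_i', x̂_{-i}) ≥ Φ(x̂) − cε. -/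
open scoped BigOperators RealInnerProductSpace

noncomputable section

/-! The regularized multiplier problem is separable: each `λ̂ i m` maximizes
`s ↦ s * g i m (x̂ i) - μ * s ^ 2` over `s ≥ 0`, whence `g i m (x̂ i) ≤ 2 μ λ̂ i m` and
`λ̂ i m * g i m (x̂ i) ≥ 0`. Since `Φ` is multilinear and the constraints are convex, the Lagrangian
`L(·, λ̂)` is convex along every direction that moves a single player, so stationarity in the
direction `(z - x̂ i) / 2` yields `L(z, x̂₋ᵢ) - L(x̂) ≥ -2ε` for every `z ∈ Δ(A i)`. At a Slater
point this bounds `∑ m, λ̂ i m` by `(2 + 2 |Φmax|) / ξmin`; then (a) follows from the first multiplier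
estimate and (b) from the deviation bound at `x'`. -/

open Set

theorem convexOn_sum {𝕜 E β ι : Type*} [Semiring 𝕜] [PartialOrder 𝕜] [AddCommMonoid E]
    [AddCommMonoid β] [PartialOrder β] [IsOrderedAddMonoid β] [Module 𝕜 E] [Module 𝕜 β]
    {s : Set E} (hs : Convex 𝕜 s) (t : Finset ι) {f : ι → E → β}
    (hf : ∀ i ∈ t, ConvexOn 𝕜 s (f i)) : ConvexOn 𝕜 s fun x => ∑ i ∈ t, f i x := by
  classical
  induction t using Finset.induction_on with
  | empty => simpa using convexOn_const (0 : β) hs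
  | insert i t hi ih =>
    simp only [Finset.sum_insert hi]
    exact (hf i (t.mem_insert_self i)).add (ih fun j hj => hf j (Finset.mem_insert_of_mem hj))

theorem ConvexOn.comp_add_smul {E β : Type*} [AddCommGroup E] [Module ℝ E]
    [AddCommMonoid β] [PartialOrder β] [Module ℝ β] {f : E → β} (hf : ConvexOn ℝ univ f) (x w : E) :
    ConvexOn ℝ univ fun t : ℝ => f (x + t • w) := by
  have h := hf.comp_affineMap (AffineMap.lineMap x (x + w))
  have hline : f ∘ AffineMap.lineMap x (x + w) = fun t : ℝ => f (x + t • w) := by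
    ext t
    simp [AffineMap.lineMap_apply_module', add_comm]
  rwa [hline, preimage_univ] at h

theorem inner_gradient_le_sub {E : Type*} [NormedAddCommGroup E] [InnerProductSpace ℝ E]
    [CompleteSpace E] {F : E → ℝ} {x w : E} (hF : DifferentiableAt ℝ F x)
    (hconv : ConvexOn ℝ univ fun t : ℝ => F (x + t • w)) :
    ⟪w, gradient F x⟫ ≤ F (x + w) - F x := by
  have hline : HasDerivAt (fun t : ℝ => x + t • w) w 0 := by
    simpa using ((hasDerivAt_id (0 : ℝ)).smul_const w).const_add x
  have hderiv : HasDerivAt (fun t : ℝ => F (x + t • w)) ⟪gradient F x, w⟫ 0 := by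
    have := hF.hasGradientAt.hasFDerivAt.comp_hasDerivAt_of_eq 0 hline (by simp)
    simpa [Function.comp_def] using this
  have := hconv.le_slope_of_hasDerivAt (mem_univ 0) (mem_univ 1) one_pos hderiv
  simpa [slope_def_field, real_inner_comm] using this

theorem IsMaxOn.apply_of_sum {ι M : Type*} [Fintype ι] [AddCommMonoid M]
    [PartialOrder M] [IsOrderedCancelAddMonoid M] {β : ι → Type*} {S : ∀ i, Set (β i)}
    {F : ∀ i, β i → M} {l : ∀ i, β i} (h : IsMaxOn (fun l => ∑ i, F i (l i)) (univ.pi S) l)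
    (hl : l ∈ univ.pi S) (i : ι) : IsMaxOn (F i) (S i) (l i) := by
  classical
  intro s hs
  have hmem : Function.update l i s ∈ univ.pi S := by
    intro j _
    rcases eq_or_ne j i with rfl | hj
    · simpa using hs
    · simpa [hj] using hl j (mem_univ j)
  have := h hmem
  simp only [mem_ofPred_eq, Function.apply_update (fun j => F j),
    Finset.sum_update_of_mem (Finset.mem_univ i)] at this
  rw [← Finset.add_sum_erase _ _ (Finset.mem_univ i), ← Finset.sdiff_singleton_eq_erase] at this
  exact le_of_add_le_add_right this

theorem le_and_nonneg_of_isMaxOn_mul_sub_sq {μ lam G : ℝ} (hμ : 0 < μ) (hlam : 0 ≤ lam)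
    (h : IsMaxOn (fun s => s * G - μ * s ^ 2) (Ici 0) lam) : G ≤ 2 * μ * lam ∧ 0 ≤ lam * G := by
  have h0 : 0 * G - μ * 0 ^ 2 ≤ lam * G - μ * lam ^ 2 := h (mem_Ici.2 le_rfl)
  refine ⟨?_, by nlinarith⟩
  rcases le_or_gt G 0 with hG | hG
  · nlinarith
  · have h1 : G / (2 * μ) * G - μ * (G / (2 * μ)) ^ 2 ≤ lam * G - μ * lam ^ 2 :=
      h (mem_Ici.2 (by positivity))
    have h2 : G / (2 * μ) * G - μ * (G / (2 * μ)) ^ 2 = G ^ 2 / (4 * μ) := by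
      field_simp; ring
    rw [h2, div_le_iff₀ (by positivity)] at h1
    nlinarith [sq_nonneg (2 * μ * lam - G)]

theorem convex_simplex (k : ℕ) : Convex ℝ (simplex k) :=
  convex_stdSimplex ℝ (Fin k) |>.linear_preimage (WithLp.linearEquiv 2 ℝ (Fin k → ℝ)).toLinearMap

theorem norm_le_one_of_mem_simplex {k : ℕ} {z : EuclideanSpace ℝ (Fin k)} (hz : z ∈ simplex k) :
    ‖z‖ ≤ 1 := by
  have hle : ∀ j, z j ≤ 1 := fun j =>
    hz.2 ▸ Finset.single_le_sum (fun j _ => hz.1 j) (Finset.mem_univ j)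
  rw [EuclideanSpace.norm_eq, Real.sqrt_le_one, ← hz.2]
  exact Finset.sum_le_sum fun j _ => by
    rw [Real.norm_eq_abs, sq_abs]
    nlinarith [hz.1 j, hle j]

section Game

variable {n : ℕ} {A : Fin n → ℕ}

theorem add_smul_single_eq_toLp_update (x : Strat n A) (i : Fin n)
    (u : EuclideanSpace ℝ (Fin (A i))) (t : ℝ) :
    x + t • PiLp.single 2 i u = WithLp.toLp 2 (Function.update x i (x i + t • u)) := by
  ext j : 1
  rcases eq_or_ne j i with rfl | h
  · simp
  · simp [h]

theorem toLp_update_mem_prodSimplex {x : Strat n A} (hx : x ∈ prodSimplex n A) {i : Fin n}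
    {v : EuclideanSpace ℝ (Fin (A i))} (hv : v ∈ simplex (A i)) :
    WithLp.toLp 2 (Function.update x i v) ∈ prodSimplex n A := by
  intro j
  rcases eq_or_ne j i with rfl | h
  · simpa using hv
  · simpa [h] using hx j

def potMultilinear (φ : (∀ i, Fin (A i)) → ℝ) :
    MultilinearMap ℝ (fun i => EuclideanSpace ℝ (Fin (A i))) ℝ :=
  ∑ a : ∀ i, Fin (A i), φ a •
    (MultilinearMap.mkPiAlgebra ℝ (Fin n) ℝ).compLinearMap
      fun i => (EuclideanSpace.proj (a i) : EuclideanSpace ℝ (Fin (A i)) →L[ℝ] ℝ).toLinearMap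

theorem pot_eq_potMultilinear (φ : (∀ i, Fin (A i)) → ℝ) (x : Strat n A) :
    pot n A φ x = potMultilinear φ x := by
  simp [pot, potMultilinear]

theorem pot_add_smul_single (φ : (∀ i, Fin (A i)) → ℝ) (x : Strat n A) (i : Fin n)
    (u : EuclideanSpace ℝ (Fin (A i))) (t : ℝ) :
    pot n A φ (x + t • PiLp.single 2 i u) =
      pot n A φ x + t * pot n A φ (WithLp.toLp 2 (Function.update x i u)) := by
  simp only [add_smul_single_eq_toLp_update, pot_eq_potMultilinear,
    MultilinearMap.map_update_add, MultilinearMap.map_update_smul, Function.update_eq_self,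
    smul_eq_mul]

theorem abs_pot_le {φ : (∀ i, Fin (A i)) → ℝ} {Φmax : ℝ} (hφ : ∀ a, |φ a| ≤ Φmax)
    {x : Strat n A} (hx : x ∈ prodSimplex n A) : |pot n A φ x| ≤ Φmax := by
  have hprod : ∀ a : ∀ i, Fin (A i), 0 ≤ ∏ i, x i (a i) :=
    fun a => Finset.prod_nonneg fun i _ => (hx i).1 (a i)
  calc |pot n A φ x| ≤ ∑ a : ∀ i, Fin (A i), |φ a| * ∏ i, x i (a i) := by
        refine (Finset.abs_sum_le_sum_abs _ _).trans_eq (Finset.sum_congr rfl fun a _ => ?_)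
        rw [abs_mul, abs_of_nonneg (hprod a)]
    _ ≤ ∑ a : ∀ i, Fin (A i), Φmax * ∏ i, x i (a i) :=
        Finset.sum_le_sum fun a _ => mul_le_mul_of_nonneg_right (hφ a) (hprod a)
    _ = Φmax := by
        rw [← Finset.mul_sum, ← Fintype.prod_sum]
        simp [fun i => (hx i).2]

variable {d : Fin n → ℕ} {φ : (∀ i, Fin (A i)) → ℝ}
  {g : ∀ i, Fin (d i) → EuclideanSpace ℝ (Fin (A i)) → ℝ} {l : ∀ i, Fin (d i) → ℝ}

variable (φ g l) in
def lagrangian (y : Strat n A) : ℝ :=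
  pot n A φ y + ∑ i, ∑ m, l i m * g i m (y i)

theorem differentiable_lagrangian (hg : ∀ i m, Differentiable ℝ (g i m)) :
    Differentiable ℝ (lagrangian φ g l) := by
  unfold lagrangian pot
  fun_prop

theorem convexOn_lagrangian_add_smul_single (hg : ∀ i m, ConvexOn ℝ univ (g i m))
    (hl : ∀ i m, 0 ≤ l i m) (x : Strat n A) (i : Fin n) (u : EuclideanSpace ℝ (Fin (A i))) :
    ConvexOn ℝ univ fun t : ℝ => lagrangian φ g l (x + t • PiLp.single 2 i u) := by
  simp only [lagrangian, pot_add_smul_single, PiLp.add_apply, PiLp.smul_apply]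
  refine ConvexOn.add ?_ (convexOn_sum convex_univ _ fun j _ =>
    convexOn_sum convex_univ _ fun m _ => ((hg j m).comp_add_smul _ _).smul (hl j m))
  exact (convexOn_const _ convex_univ).add
    (((LinearMap.id : ℝ →ₗ[ℝ] ℝ).smulRight _).convexOn convex_univ)

theorem lagrangian_toLp_update_sub (x : Strat n A) (i : Fin n)
    (z : EuclideanSpace ℝ (Fin (A i))) :
    lagrangian φ g l (WithLp.toLp 2 (Function.update x i z)) - lagrangian φ g l x =
      pot n A φ (WithLp.toLp 2 (Function.update x i z)) - pot n A φ x +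
        ∑ m, l i m * (g i m z - g i m (x i)) := by
  have hother : ∀ j ≠ i,
      ∑ m, l j m * g j m (Function.update x i z j) - ∑ m, l j m * g j m (x j) = 0 :=
    fun j hj => by simp [Function.update_of_ne hj]
  simp only [lagrangian]
  rw [add_sub_add_comm, ← Finset.sum_sub_distrib, Fintype.sum_eq_single i hother]
  simp [mul_sub]

theorem lagrangian_update_sub_ge_of_stationary (hg : ∀ i m, ConvexOn ℝ univ (g i m))
    (hgd : ∀ i m, Differentiable ℝ (g i m)) (hl : ∀ i m, 0 ≤ l i m) {x : Strat n A}
    (hx : x ∈ prodSimplex n A) {C ε : ℝ}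
    (hstat : ∀ δ : Strat n A, x + δ ∈ prodSimplex n A → ‖δ‖ ≤ 1 →
      -ε ≤ ⟪δ, gradient (fun y => lagrangian φ g l y - C) x⟫)
    {i : Fin n} {z : EuclideanSpace ℝ (Fin (A i))} (hz : z ∈ simplex (A i)) :
    -(2 * ε) ≤ lagrangian φ g l (WithLp.toLp 2 (Function.update x i z)) - lagrangian φ g l x := by
  set w : Strat n A := PiLp.single 2 i (z - x i)
  have hw : x + w = WithLp.toLp 2 (Function.update x i z) := by
    simpa using add_smul_single_eq_toLp_update x i (z - x i) 1
  have hmem : x + (1 / 2 : ℝ) • w ∈ prodSimplex n A := by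
    rw [add_smul_single_eq_toLp_update]
    exact toLp_update_mem_prodSimplex hx
      ((convex_simplex _).add_smul_sub_mem (hx i) hz ⟨by norm_num, by norm_num⟩)
  have hnorm : ‖(1 / 2 : ℝ) • w‖ ≤ 1 := by
    have := (norm_sub_le z (x i)).trans
      (add_le_add (norm_le_one_of_mem_simplex hz) (norm_le_one_of_mem_simplex (hx i)))
    rw [norm_smul, PiLp.norm_single]
    norm_num
    linarith
  have hgrad : ⟪w, gradient (fun y => lagrangian φ g l y - C) x⟫ ≤
      lagrangian φ g l (x + w) - lagrangian φ g l x := by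
    have hline : ConvexOn ℝ univ fun t : ℝ => lagrangian φ g l (x + t • w) - C :=
      (convexOn_lagrangian_add_smul_single hg hl x i _).sub (concaveOn_const C convex_univ)
    simpa using inner_gradient_le_sub ((differentiable_lagrangian hgd).sub_const C x) hline
  have hstep := hstat _ hmem hnorm
  rw [real_inner_smul_left] at hstep
  rw [← hw]
  linarith

theorem le_and_nonneg_of_forall_sum_mul_sub_sq_le {ι : Type*} [Fintype ι]
    {κ : ι → Type*} [∀ i, Fintype (κ i)] {G l : ∀ i, κ i → ℝ} {μ : ℝ}
    (hμ : 0 < μ) (hl : ∀ i m, 0 ≤ l i m)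
    (hmax : ∀ l' : ∀ i, κ i → ℝ, (∀ i m, 0 ≤ l' i m) →
      (∑ i, ∑ m, l' i m * G i m) - μ * ∑ i, ∑ m, (l' i m) ^ 2 ≤
        (∑ i, ∑ m, l i m * G i m) - μ * ∑ i, ∑ m, (l i m) ^ 2)
    (i : ι) (m : κ i) : G i m ≤ 2 * μ * l i m ∧ 0 ≤ l i m * G i m := by
  have hmem : l ∈ univ.pi fun i => univ.pi fun _ => Ici 0 := fun i _ m _ => hl i m
  have hmax' : IsMaxOn (fun l' => ∑ i, ∑ m, (l' i m * G i m - μ * l' i m ^ 2))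
      (univ.pi fun i => univ.pi fun _ => Ici 0) l := by
    intro l' hl'
    simpa only [mem_ofPred_eq, Finset.sum_sub_distrib, Finset.mul_sum] using
      hmax l' fun i m => hl' i (mem_univ i) m (mem_univ m)
  have hrow : IsMaxOn (fun w => ∑ m, (w m * G i m - μ * w m ^ 2)) (univ.pi fun _ => Ici 0) (l i) :=
    hmax'.apply_of_sum (F := fun i (w : κ i → ℝ) => ∑ m, (w m * G i m - μ * w m ^ 2)) hmem i
  have hentry : IsMaxOn (fun s => s * G i m - μ * s ^ 2) (Ici 0) (l i m) :=
    hrow.apply_of_sum (F := fun m (s : ℝ) => s * G i m - μ * s ^ 2) (hmem i (mem_univ i)) m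
  exact le_and_nonneg_of_isMaxOn_mul_sub_sq hμ (hl i m) hentry

theorem sum_mul_sub_le_mul_sum {ι : Type*} [Fintype ι] {l a b : ι → ℝ} {B : ℝ}
    (hl : ∀ m, 0 ≤ l m) (ha : ∀ m, 0 ≤ l m * a m) (hb : ∀ m, b m ≤ B) :
    ∑ m, l m * (b m - a m) ≤ B * ∑ m, l m := by
  rw [Finset.mul_sum]
  refine Finset.sum_le_sum fun m _ => ?_
  nlinarith [mul_le_mul_of_nonneg_left (hb m) (hl m), ha m]

theorem sum_multipliers_le {Φmax ξmin ε : ℝ} (hφ : ∀ a, |φ a| ≤ Φmax) {x : Strat n A}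
    (hx : x ∈ prodSimplex n A) (hl : ∀ i m, 0 ≤ l i m) {i : Fin n}
    (hslack : ∀ m, 0 ≤ l i m * g i m (x i)) (hξmin : 0 < ξmin)
    {xt : EuclideanSpace ℝ (Fin (A i))} (hxt : xt ∈ simplex (A i)) (hgxt : ∀ m, g i m xt ≤ -ξmin)
    (hdev : -(2 * ε) ≤ lagrangian φ g l (WithLp.toLp 2 (Function.update x i xt)) -
      lagrangian φ g l x) :
    ∑ m, l i m ≤ (2 * ε + 2 * Φmax) / ξmin := by
  rw [lagrangian_toLp_update_sub] at hdev
  have hmul := sum_mul_sub_le_mul_sum (hl i) hslack hgxt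
  have hpot := abs_le.1 (abs_pot_le hφ hx)
  have hpot' := abs_le.1 (abs_pot_le hφ (toLp_update_mem_prodSimplex hx hxt))
  rw [le_div_iff₀ hξmin]
  linarith

end Game

theorem approx_stationary_implies_approx_nash_general
    (n Amax Dtot : ℕ) (Φmax Φmin γ Gmax ξmin : ℝ) (hξmin : 0 < ξmin) :
    ∃ c > (0 : ℝ),
      ∀ (A : Fin n → ℕ) (φ : (∀ i, Fin (A i)) → ℝ)
        (d : Fin n → ℕ) (g : ∀ i, Fin (d i) → EuclideanSpace ℝ (Fin (A i)) → ℝ),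
        (∀ a, |φ a| ≤ Φmax) → (∀ i, A i ≤ Amax) → (∑ i, d i) = Dtot →
        (∀ x ∈ prodSimplex n A, Φmin ≤ pot n A φ x) →
        (∀ i m, ConvexOn ℝ Set.univ (g i m)) →
        (∀ i m, Differentiable ℝ (g i m)) →
        (∀ i m, LipschitzWith γ.toNNReal (gradient (g i m))) →
        (∀ i m, ∀ y ∈ simplex (A i), |g i m y| ≤ Gmax) →
        ∀ ξ : ∀ i, Fin (d i) → ℝ, (∀ i m, ξmin ≤ ξ i m) →
        (∀ i, ∃ xtil ∈ simplex (A i), ∀ m, g i m xtil ≤ -(ξ i m)) →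
        ∀ ε : ℝ, 0 < ε → ε ≤ 1 → ∀ μ : ℝ, 0 < μ → μ ≤ ε →
        ∀ xhat ∈ prodSimplex n A, ∀ lhat : ∀ i, Fin (d i) → ℝ,
          (∀ i m, 0 ≤ lhat i m) →
          (∀ l : ∀ i, Fin (d i) → ℝ, (∀ i m, 0 ≤ l i m) →
            (∑ i, ∑ m, l i m * g i m (xhat i)) - μ * ∑ i, ∑ m, (l i m) ^ 2 ≤
              (∑ i, ∑ m, lhat i m * g i m (xhat i)) - μ * ∑ i, ∑ m, (lhat i m) ^ 2) →
          (∀ δ : Strat n A, xhat + δ ∈ prodSimplex n A → ‖δ‖ ≤ 1 →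
            -ε ≤ ⟪δ, gradient (fun y : Strat n A =>
              pot n A φ y + (∑ i, ∑ m, lhat i m * g i m (y i)) -
                μ * ∑ i, ∑ m, (lhat i m) ^ 2) xhat⟫) →
          (∀ i m, g i m (xhat i) ≤ c * ε) ∧
          (∀ i, ∀ x' ∈ simplex (A i), (∀ m, g i m x' ≤ ε) →
            pot n A φ xhat - c * ε ≤ pot n A φ (WithLp.toLp 2 (Function.update xhat i x'))) := by
  set Λ := (2 + 2 * |Φmax|) / ξmin
  refine ⟨2 * Λ + 2, by positivity, ?_⟩
  intro A φ d g hφ _ _ _ hconv hdiff _ _ ξ hξ hslater ε hε hε1 μ hμ hμε x hx l hl hmax hstat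
  have hslack := le_and_nonneg_of_forall_sum_mul_sub_sq_le (G := fun i m => g i m (x i)) hμ hl hmax
  have hdev : ∀ i, ∀ z ∈ simplex (A i), -(2 * ε) ≤
      lagrangian φ g l (WithLp.toLp 2 (Function.update x i z)) - lagrangian φ g l x :=
    fun i z hz => lagrangian_update_sub_ge_of_stationary hconv hdiff hl hx hstat hz
  have hsum : ∀ i, ∑ m, l i m ≤ Λ := by
    intro i
    obtain ⟨xt, hxt, hgxt⟩ := hslater i
    refine (sum_multipliers_le hφ hx hl (fun m => (hslack i m).2) hξmin hxt
      (fun m => (hgxt m).trans (neg_le_neg (hξ i m))) (hdev i xt hxt)).trans ?_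
    exact div_le_div_of_nonneg_right (by linarith [le_abs_self Φmax]) hξmin.le
  refine ⟨fun i m => ?_, fun i x' hx' hfeas => ?_⟩
  · calc g i m (x i) ≤ 2 * μ * l i m := (hslack i m).1
      _ ≤ 2 * ε * Λ := by
        have hlΛ := (Finset.single_le_sum (fun m _ => hl i m) (Finset.mem_univ m)).trans (hsum i)
        exact mul_le_mul (by linarith) hlΛ (hl i m) (by positivity)
      _ ≤ (2 * Λ + 2) * ε := by linarith
  · have hdev' := hdev i x' hx'
    rw [lagrangian_toLp_update_sub] at hdev'
    have hmul := sum_mul_sub_le_mul_sum (hl i) (fun m => (hslack i m).2) hfeas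
    have hΛε := mul_le_mul_of_nonneg_left (hsum i) hε.le
    have hΛε0 : 0 ≤ Λ * ε := by positivity
    linarith

/-- **Approximate stationarity of the regularized Lagrangian implies an approximately
feasible approximate Nash equilibrium.**  Under Slater's condition with margins
`ξ i m ≥ ξmin > 0`, there is a constant `c > 0` depending only on
`n, Amax, Φmax, Φmin, γ, d, Gmax, ξmin` such that: for every `ε ∈ (0,1]`, every
`0 < μ ≤ ε`, every `x̂ ∈ Δ^n` and `λ̂ = argmax_{λ⪰0} L̃(x̂,λ)`, if
`−min{δᵀ∇ₓL̃(x̂,λ̂) : x̂+δ ∈ Δ^n, ‖δ‖≤1} ≤ ε`, then (a) `g_{i,m}(x̂_i) ≤ cε` for all `i, m`;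
and (b) for every player `i` and every `ε`-approximately feasible deviation `x'_i ∈ Δ(A_i)`
(`g_{i,m}(x'_i) ≤ ε` for all `m`), `Φ(x'_i, x̂_{-i}) ≥ Φ(x̂) − cε`. -/
theorem approx_stationary_implies_approx_nash
    (n Amax Dtot : ℕ) (Φmax Φmin γ Gmax ξmin : ℝ) (hγ : 0 ≤ γ) (hξmin : 0 < ξmin) :
    ∃ c > (0 : ℝ),
      ∀ (A : Fin n → ℕ) (φ : (∀ i, Fin (A i)) → ℝ)
        (d : Fin n → ℕ) (g : ∀ i, Fin (d i) → EuclideanSpace ℝ (Fin (A i)) → ℝ),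
        (∀ a, |φ a| ≤ Φmax) → (∀ i, A i ≤ Amax) → (∑ i, d i) = Dtot →
        (∀ x ∈ prodSimplex n A, Φmin ≤ pot n A φ x) →
        (∀ i m, ConvexOn ℝ Set.univ (g i m)) →
        (∀ i m, Differentiable ℝ (g i m)) →
        (∀ i m, LipschitzWith γ.toNNReal (gradient (g i m))) →
        (∀ i m, ∀ y ∈ simplex (A i), |g i m y| ≤ Gmax) →
        ∀ ξ : ∀ i, Fin (d i) → ℝ, (∀ i m, ξmin ≤ ξ i m) →
        (∀ i, ∃ xtil ∈ simplex (A i), ∀ m, g i m xtil ≤ -(ξ i m)) →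
        ∀ ε : ℝ, 0 < ε → ε ≤ 1 → ∀ μ : ℝ, 0 < μ → μ ≤ ε →
        ∀ xhat ∈ prodSimplex n A, ∀ lhat : ∀ i, Fin (d i) → ℝ,
          (∀ i m, 0 ≤ lhat i m) →
          (∀ l : ∀ i, Fin (d i) → ℝ, (∀ i m, 0 ≤ l i m) →
            (∑ i, ∑ m, l i m * g i m (xhat i)) - μ * ∑ i, ∑ m, (l i m) ^ 2 ≤
              (∑ i, ∑ m, lhat i m * g i m (xhat i)) - μ * ∑ i, ∑ m, (lhat i m) ^ 2) →
          (∀ δ : Strat n A, xhat + δ ∈ prodSimplex n A → ‖δ‖ ≤ 1 →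
            -ε ≤ ⟪δ, gradient (fun y : Strat n A =>
              pot n A φ y + (∑ i, ∑ m, lhat i m * g i m (y i)) -
                μ * ∑ i, ∑ m, (lhat i m) ^ 2) xhat⟫) →
          (∀ i m, g i m (xhat i) ≤ c * ε) ∧
          (∀ i, ∀ x' ∈ simplex (A i), (∀ m, g i m x' ≤ ε) →
            pot n A φ xhat - c * ε ≤ pot n A φ (WithLp.toLp 2 (Function.update xhat i x'))) :=
  approx_stationary_implies_approx_nash_general n Amax Dtot Φmax Φmin γ Gmax ξmin hξmin
end
end
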